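/- Let n ≥ 2 be even, let χ(t) = t^n − (n−1)!, let X_1 = X(a(1)) where a(1) = (−(n−1), −(n−2), …, −1), and let Y_0 be the n×n matrix with superdiagonal entries all 1. Then χ(X_1 + Y_0^{n−1}) = −2·(n−1)!·I; consequently the transformation Φ_{−p} ∘ Ψ_χ ∘ Φ_p with p(t) = t^{n−1} sends the pair (X_1, Y_0) to a pair whose second component is Y_0 − 2·(n−1)!·I, which is not conjugate to Y_0, so this transformation does not fix the conjugacy class of (X_1, Y_0). -/

import Mathlib

/-!
Write `n = m + 1`. The matrix `X₁ + Y₀ᵐ` is a weighted cyclic shift `e_j ↦ c_j e_{j+1}`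
(indices mod `n`): the weights are the subdiagonal entries `-m, …, -1` of `X₁` followed by the
corner entry `1` of `Y₀ᵐ`. Its `n`-th power is therefore `(∏ c_j) • 1 = (-1)ᵐ m! • 1`, which is
`-(n-1)! • 1` for `n` even, so `χ(X₁ + Y₀ᵐ) = -2(n-1)! • 1`. The transformation thus moves `Y₀`
by a nonzero scalar matrix, which changes its trace, whereas conjugation preserves the trace.
-/

open Matrix Polynomial

noncomputable section

/-- `n×n` complex matrices. -/
abbrev Mat (n : ℕ) := Matrix (Fin n) (Fin n) ℂ

/-- The Calogero–Moser condition: `[X,Y] + I` has rank one. -/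
def IsCMPair {n : ℕ} (P : Mat n × Mat n) : Prop :=
  (P.1 * P.2 - P.2 * P.1 + 1).rank = 1

/-- Simultaneous conjugacy of pairs of matrices. -/
def SimConj {n : ℕ} (P Q : Mat n × Mat n) : Prop :=
  ∃ A : (Mat n)ˣ, Q.1 = ↑A⁻¹ * P.1 * ↑A ∧ Q.2 = ↑A⁻¹ * P.2 * ↑A

/-- Conjugation by a unit, as a `ℂ`-algebra homomorphism. -/
def conjAlgHom {n : ℕ} (A : (Mat n)ˣ) : Mat n →ₐ[ℂ] Mat n where
  toFun X := ↑A⁻¹ * X * ↑A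
  map_one' := by show (↑A⁻¹ : Mat n) * 1 * ↑A = 1; rw [mul_one, Units.inv_mul]
  map_mul' X Y := by simp only [mul_assoc, Units.mul_inv_cancel_left]
  map_zero' := by simp only [mul_zero, zero_mul]
  map_add' X Y := by simp only [mul_add, add_mul]
  commutes' r := by
    show (↑A⁻¹ : Mat n) * algebraMap ℂ (Mat n) r * ↑A = algebraMap ℂ (Mat n) r
    rw [mul_assoc, Algebra.commutes r ((A : Mat n)), ← mul_assoc, Units.inv_mul, one_mul]

lemma conjAlgHom_apply {n : ℕ} (A : (Mat n)ˣ) (X : Mat n) :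
    conjAlgHom A X = ↑A⁻¹ * X * ↑A := rfl

lemma simConj_refl {n : ℕ} (P : Mat n × Mat n) : SimConj P P :=
  ⟨1, by rw [inv_one, Units.val_one, one_mul, mul_one],
      by rw [inv_one, Units.val_one, one_mul, mul_one]⟩

lemma simConj_symm {n : ℕ} {P Q : Mat n × Mat n} (h : SimConj P Q) : SimConj Q P := by
  obtain ⟨A, h1, h2⟩ := h
  refine ⟨A⁻¹, ?_, ?_⟩
  · rw [inv_inv, h1]
    simp only [mul_assoc, Units.mul_inv_cancel_left, Units.mul_inv, mul_one]
  · rw [inv_inv, h2]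
    simp only [mul_assoc, Units.mul_inv_cancel_left, Units.mul_inv, mul_one]

lemma simConj_trans {n : ℕ} {P Q R : Mat n × Mat n} (h : SimConj P Q) (h' : SimConj Q R) :
    SimConj P R := by
  obtain ⟨A, h1, h2⟩ := h
  obtain ⟨B, h1', h2'⟩ := h'
  refine ⟨A * B, ?_, ?_⟩
  · rw [h1', h1, _root_.mul_inv_rev, Units.val_mul, Units.val_mul]
    simp only [mul_assoc]
  · rw [h2', h2, _root_.mul_inv_rev, Units.val_mul, Units.val_mul]
    simp only [mul_assoc]

/-- The setoid of simultaneous conjugacy on Calogero–Moser pairs. -/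
def CMSetoid (n : ℕ) : Setoid {P : Mat n × Mat n // IsCMPair P} where
  r P Q := SimConj P.1 Q.1
  iseqv := ⟨fun P => simConj_refl P.1, simConj_symm, simConj_trans⟩

/-- The `n`-th Calogero–Moser space: simultaneous conjugacy classes of pairs
`(X,Y)` of `n×n` complex matrices with `rank ([X,Y] + 1) = 1`. -/
def CMSpace (n : ℕ) := Quotient (CMSetoid n)

/-- The class of a Calogero–Moser pair in the Calogero–Moser space. -/
def CMSpace.mk {n : ℕ} (P : Mat n × Mat n) (h : IsCMPair P) : CMSpace n :=
  Quotient.mk (CMSetoid n) ⟨P, h⟩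

/-- The action `Φ_p (X,Y) = (X + p(Y), Y)` on pairs of matrices. -/
def phiPair {n : ℕ} (p : ℂ[X]) (P : Mat n × Mat n) : Mat n × Mat n :=
  (P.1 + aeval P.2 p, P.2)

/-- The action `Ψ_q (X,Y) = (X, Y + q(X))` on pairs of matrices. -/
def psiPair {n : ℕ} (q : ℂ[X]) (P : Mat n × Mat n) : Mat n × Mat n :=
  (P.1, P.2 + aeval P.1 q)

lemma commute_aeval {n : ℕ} (Y : Mat n) (p : ℂ[X]) : Commute (aeval Y p) Y := by
  simpa using (Commute.all p Polynomial.X).map (aeval Y)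

lemma isCMPair_phiPair {n : ℕ} (p : ℂ[X]) {P : Mat n × Mat n} (h : IsCMPair P) :
    IsCMPair (phiPair p P) := by
  have hc := (commute_aeval P.2 p).eq
  unfold IsCMPair phiPair at *
  dsimp only
  rw [add_mul, mul_add, hc]
  convert h using 2
  abel

lemma isCMPair_psiPair {n : ℕ} (q : ℂ[X]) {P : Mat n × Mat n} (h : IsCMPair P) :
    IsCMPair (psiPair q P) := by
  have hc := (commute_aeval P.1 q).eq
  unfold IsCMPair psiPair at *
  dsimp only
  rw [add_mul, mul_add, hc]
  convert h using 2
  abel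

lemma simConj_phiPair {n : ℕ} (p : ℂ[X]) {P Q : Mat n × Mat n} (h : SimConj P Q) :
    SimConj (phiPair p P) (phiPair p Q) := by
  obtain ⟨A, h1, h2⟩ := h
  refine ⟨A, ?_, h2⟩
  have hconj : aeval ((↑A⁻¹ : Mat n) * P.2 * (↑A : Mat n)) p
      = (↑A⁻¹ : Mat n) * aeval P.2 p * (↑A : Mat n) := by
    simpa only [conjAlgHom_apply] using aeval_algHom_apply (conjAlgHom A) P.2 p
  show Q.1 + aeval Q.2 p = (↑A⁻¹ : Mat n) * (P.1 + aeval P.2 p) * (↑A : Mat n)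
  rw [h1, h2, hconj, mul_add, add_mul]

lemma simConj_psiPair {n : ℕ} (q : ℂ[X]) {P Q : Mat n × Mat n} (h : SimConj P Q) :
    SimConj (psiPair q P) (psiPair q Q) := by
  obtain ⟨A, h1, h2⟩ := h
  refine ⟨A, h1, ?_⟩
  have hconj : aeval ((↑A⁻¹ : Mat n) * P.1 * (↑A : Mat n)) q
      = (↑A⁻¹ : Mat n) * aeval P.1 q * (↑A : Mat n) := by
    simpa only [conjAlgHom_apply] using aeval_algHom_apply (conjAlgHom A) P.1 q
  show Q.2 + aeval Q.1 q = (↑A⁻¹ : Mat n) * (P.2 + aeval P.1 q) * (↑A : Mat n)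
  rw [h1, h2, hconj, mul_add, add_mul]

/-- The action `Φ_p` on the Calogero–Moser space. -/
def Phi {n : ℕ} (p : ℂ[X]) : CMSpace n → CMSpace n :=
  @Quotient.map _ _ (CMSetoid n) (CMSetoid n)
    (fun P => ⟨phiPair p P.1, isCMPair_phiPair p P.2⟩)
    (fun _ _ h => simConj_phiPair p h)

/-- The action `Ψ_q` on the Calogero–Moser space. -/
def Psi {n : ℕ} (q : ℂ[X]) : CMSpace n → CMSpace n :=
  @Quotient.map _ _ (CMSetoid n) (CMSetoid n)
    (fun P => ⟨psiPair q P.1, isCMPair_psiPair q P.2⟩)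
    (fun _ _ h => simConj_psiPair q h)


/-- The subdiagonal matrix `X(a)` with `(i+1,i)` entry `a i` (1-indexed). -/
def subd (n : ℕ) (a : ℕ → ℂ) : Mat n :=
  Matrix.of fun i j => if (i : ℕ) = (j : ℕ) + 1 then a (i : ℕ) else 0

/-- The matrix `X₀` with subdiagonal entries `1, 2, …, n-1`. -/
def X0 (n : ℕ) : Mat n := subd n (fun i => (i : ℂ))

/-- The matrix `Y₀` with superdiagonal entries all `1`. -/
def Y0 (n : ℕ) : Mat n :=
  Matrix.of fun i j => if (j : ℕ) = (i : ℕ) + 1 then 1 else 0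

/-- The vector `a(r) = (1, 2, …, r-1, -(n-r), …, -2, -1)` (1-indexed entries `1,…,n-1`). -/
def avec (n r : ℕ) : ℕ → ℂ := fun i => if i < r then (i : ℂ) else (i : ℂ) - n

theorem prod_range_natCast_sub_self {R : Type*} [CommRing R] (m : ℕ) :
    ∏ j ∈ Finset.range m, ((j : R) - m) = (-1) ^ m * m.factorial := by
  calc ∏ j ∈ Finset.range m, ((j : R) - m) = ∏ j ∈ Finset.range m, (-1) * ((m : R) - j) :=
        Finset.prod_congr rfl fun _ _ => by ring
    _ = (-1) ^ m * m.factorial := by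
        rw [Finset.prod_mul_distrib, Finset.prod_const, Finset.card_range,
          ← descPochhammer_eval_eq_prod_range, descPochhammer_eval_eq_descFactorial,
          Nat.descFactorial_self]

theorem sub_smul_one_ne_units_conj {ι R : Type*} [Fintype ι] [DecidableEq ι] [CommRing R]
    (Y : Matrix ι ι R) (A : (Matrix ι ι R)ˣ) {c : R} (hc : c * Fintype.card ι ≠ 0) :
    Y - c • 1 ≠ (↑A⁻¹ : Matrix ι ι R) * Y * (↑A : Matrix ι ι R) := by
  intro h
  have htrace := congrArg trace h
  rw [trace_sub, trace_smul, trace_one, trace_units_conj', smul_eq_mul, sub_eq_self] at htrace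
  exact hc htrace

open scoped Fin.NatCast Fin.CommRing

section WeightedShift

variable {R : Type*} [CommSemiring R] {n : ℕ} [NeZero n]

def weightedShift (k : Fin n) (w : Fin n → R) : Matrix (Fin n) (Fin n) R :=
  of fun i j => if i = j + k then w j else 0

theorem weightedShift_mul (k l : Fin n) (w c : Fin n → R) :
    weightedShift k w * weightedShift l c = weightedShift (k + l) (fun j => w (j + l) * c j) := by
  ext i j
  simp only [weightedShift, mul_apply, of_apply, ite_mul, zero_mul, mul_ite, mul_zero]
  rw [Finset.sum_ite_eq' Finset.univ (j + l)]
  simp [add_assoc, add_comm l]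

theorem weightedShift_one_pow (c : Fin n → R) (m : ℕ) :
    weightedShift 1 c ^ m =
      weightedShift m (fun j => ∏ t ∈ Finset.range m, c (j + (t : Fin n))) := by
  induction m with
  | zero => ext i j; simp [weightedShift, one_apply]
  | succ m ih =>
    rw [pow_succ, ih, weightedShift_mul, Nat.cast_succ]
    congr 1
    funext j
    rw [Finset.prod_range_succ', Nat.cast_zero, add_zero]
    congr 1
    refine Finset.prod_congr rfl fun t _ => ?_
    rw [Nat.cast_succ, add_comm (t : Fin n), add_assoc]

theorem weightedShift_one_pow_card (c : Fin n → R) :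
    weightedShift 1 c ^ n = (∏ s, c s) • (1 : Matrix (Fin n) (Fin n) R) := by
  have hprod (j : Fin n) : ∏ t ∈ Finset.range n, c (j + t) = ∏ s, c s := by
    rw [← Fin.prod_univ_eq_prod_range (fun t => c (j + t))]
    exact Fintype.prod_equiv (Equiv.addLeft j) _ _ fun t => by simp
  rw [weightedShift_one_pow, Fin.natCast_self]
  ext i j
  simp [hprod, weightedShift, one_apply]

end WeightedShift

theorem Y0_pow (n k : ℕ) :
    Y0 n ^ k = of fun i j : Fin n => if (j : ℕ) = i + k then 1 else 0 := by
  induction k with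
  | zero => ext i j; simp [one_apply, Fin.ext_iff, eq_comm]
  | succ k ih =>
    ext i j
    rw [pow_succ, ih, mul_apply]
    simp only [Y0, of_apply, mul_ite, mul_one, mul_zero]
    rw [Fin.sum_univ_eq_sum_range
      (fun l => if (j : ℕ) = l + 1 then if l = i + k then 1 else 0 else 0)]
    simp only [← ite_and, and_comm (a := (j : ℕ) = _)]
    rw [Finset.sum_congr rfl fun l _ => ite_and .., Finset.sum_ite_eq']
    simp only [Finset.mem_range]
    have := j.isLt
    split_ifs <;> first | rfl | omega

def x1CycleWeights (m : ℕ) : Fin (m + 1) → ℂ :=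
  fun j => if j = Fin.last m then 1 else (j : ℂ) - m

theorem subd_avec_one_add_Y0_pow (m : ℕ) :
    subd (m + 1) (avec (m + 1) 1) + Y0 (m + 1) ^ m = weightedShift 1 (x1CycleWeights m) := by
  ext i j
  simp only [Matrix.add_apply, subd, Y0_pow, weightedShift, x1CycleWeights, avec, of_apply]
  induction j using Fin.lastCases with
  | last =>
    rw [Fin.last_add_one]
    have := i.isLt
    simp only [Fin.val_last, Fin.ext_iff, Fin.val_zero, if_true]
    split_ifs <;> first | omega | simp
  | cast j =>
    rw [Fin.coeSucc_eq_succ]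
    have := j.isLt
    simp only [Fin.ext_iff, Fin.val_succ, Fin.val_castSucc, Fin.val_last]
    split_ifs <;> first | omega | simp_all

theorem prod_x1CycleWeights (m : ℕ) : ∏ s, x1CycleWeights m s = (-1) ^ m * m.factorial := by
  rw [Fin.prod_univ_castSucc, ← prod_range_natCast_sub_self, ← Fin.prod_univ_eq_prod_range]
  simp [x1CycleWeights, Fin.castSucc_ne_last]

/-- The even case: for `χ(t) = tⁿ - (n-1)!` and `p(t) = t^{n-1}`, one has
`χ(X₁ + Y₀^{n-1}) = -2(n-1)! I`, the second component of
`Φ_{-p}Ψ_χΦ_p (X₁, Y₀)` is `Y₀ - 2(n-1)! I`, which is not conjugate to `Y₀`,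
so `Φ_{-p}Ψ_χΦ_p` does not fix the conjugacy class of `(X₁, Y₀)`. -/
theorem even_case_not_fixed (n : ℕ) (hn : 2 ≤ n) (heven : Even n) :
    aeval (subd n (avec n 1) + Y0 n ^ (n - 1))
        (Polynomial.X ^ n - Polynomial.C ((Nat.factorial (n - 1) : ℂ))) =
      (-(2 * ((Nat.factorial (n - 1) : ℂ)))) • (1 : Mat n) ∧
    (phiPair (-(Polynomial.X ^ (n - 1)))
        (psiPair (Polynomial.X ^ n - Polynomial.C ((Nat.factorial (n - 1) : ℂ)))
          (phiPair (Polynomial.X ^ (n - 1)) (subd n (avec n 1), Y0 n)))).2 =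
      Y0 n - (2 * ((Nat.factorial (n - 1) : ℂ))) • (1 : Mat n) ∧
    (¬ ∃ A : (Mat n)ˣ,
        Y0 n - (2 * ((Nat.factorial (n - 1) : ℂ))) • (1 : Mat n) = ↑A⁻¹ * Y0 n * ↑A) ∧
    ¬ SimConj (subd n (avec n 1), Y0 n)
        (phiPair (-(Polynomial.X ^ (n - 1)))
          (psiPair (Polynomial.X ^ n - Polynomial.C ((Nat.factorial (n - 1) : ℂ)))
            (phiPair (Polynomial.X ^ (n - 1)) (subd n (avec n 1), Y0 n)))) := by
  obtain ⟨m, rfl⟩ : ∃ m, n = m + 1 := ⟨n - 1, by omega⟩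
  have hm : Odd m := by simpa [Nat.even_add_one] using heven
  simp only [Nat.add_sub_cancel]
  set f : ℂ := (m.factorial : ℂ)
  have hchi : aeval (subd (m + 1) (avec (m + 1) 1) + Y0 (m + 1) ^ m) (X ^ (m + 1) - C f) =
      (-(2 * f)) • (1 : Mat (m + 1)) := by
    rw [map_sub, aeval_X_pow, aeval_C, subd_avec_one_add_Y0_pow, weightedShift_one_pow_card,
      prod_x1CycleWeights, hm.neg_one_pow, Algebra.algebraMap_eq_smul_one, ← sub_smul]
    congr 1
    ring
  have hsecond : (phiPair (-X ^ m) (psiPair (X ^ (m + 1) - C f)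
      (phiPair (X ^ m) (subd (m + 1) (avec (m + 1) 1), Y0 (m + 1))))).2 =
      Y0 (m + 1) - (2 * f) • 1 := by
    simp only [phiPair, psiPair, aeval_X_pow]
    rw [hchi, neg_smul, ← sub_eq_add_neg]
  have hnot_conj : ¬ ∃ A : (Mat (m + 1))ˣ, Y0 (m + 1) - (2 * f) • 1 = ↑A⁻¹ * Y0 (m + 1) * ↑A :=
    fun ⟨A, hA⟩ => sub_smul_one_ne_units_conj (c := 2 * f) _ A
      (by simp [f, Nat.factorial_ne_zero, Nat.cast_add_one_ne_zero]) hA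
  exact ⟨hchi, hsecond, hnot_conj, fun ⟨A, _, hA⟩ => hnot_conj ⟨A, hsecond ▸ hA⟩⟩

end
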